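/- arXiv:1512.08204 — 2 statements merged into one kernel-verified Lean document; each statement's English description precedes it below -/
import Mathlib

section
/- For k ∈ {1,…,d}, the dual of the (k,∞)-support norm is ‖u‖_{*,(k,∞)} = Σ_{i=1}^k |u|↓_i (the Ky Fan-type norm summing the k largest absolute values), and the (k,∞)-support norm itself equals ‖w‖_{(k,∞)} = max(‖w‖_∞, ‖w‖_1/k). -/
/-- The (k,∞)-support norm, defined by infimal convolution of ℓ∞ norms over
supports of cardinality at most k. -/
noncomputable def ksupInftyNorm (d k : ℕ) (w : Fin d → ℝ) : ℝ :=
  sInf {x : ℝ | ∃ v : Finset (Fin d) → (Fin d → ℝ),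
    (∀ g : Finset (Fin d), ∀ i, i ∉ g → v g i = 0) ∧
    (∑ g ∈ Finset.univ.filter (fun g : Finset (Fin d) => g.card ≤ k), v g) = w ∧
    x = ∑ g ∈ Finset.univ.filter (fun g : Finset (Fin d) => g.card ≤ k), ⨆ i, |v g i|}

/-!
Every admissible decomposition `w = ∑ v_g` costs at least `‖w‖_∞` and at least `‖w‖₁ / k`,
since each piece has at most `k` nonzero entries. Conversely, the vectors admitting a
decomposition of cost `≤ t` form a convex set containing the `k`-sparse vectors with entries in
`{0, ±t}`. Every `w` with `‖w‖_∞ ≤ t` and `‖w‖₁ ≤ k t` lies in the convex hull of the latter: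
for any `u`, `⟪u, w⟫ ≤ t · (sum of the k largest |u_i|)`, which is the value of `u` at `t · sign u`
on the `k` largest coordinates of `|u|`, so no functional separates `w` from that hull.
With `t = 1` the same inequality and vertex compute the dual norm.
-/

open Finset

theorem abs_coe_signType_le_one {α : Type*} [Ring α] [LinearOrder α] [IsStrictOrderedRing α]
    (a : SignType) : |(a : α)| ≤ 1 := by
  cases a <;> simp

section

variable {ι : Type*} [Fintype ι] (k : ℕ)

noncomputable def decompCost (v : Finset ι → ι → ℝ) : ℝ :=
  ∑ g ∈ univ.filter (fun g : Finset ι => g.card ≤ k), ⨆ i, |v g i|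

def IsKSupportDecomp (w : ι → ℝ) (v : Finset ι → ι → ℝ) : Prop :=
  (∀ g : Finset ι, ∀ i ∉ g, v g i = 0) ∧
    ∑ g ∈ univ.filter (fun g : Finset ι => g.card ≤ k), v g = w

def kSupportBall (t : ℝ) : Set (ι → ℝ) :=
  {w | ∃ v, IsKSupportDecomp k w v ∧ decompCost k v ≤ t}

variable {k}

theorem abs_le_iSup_abs (f : ι → ℝ) (i : ι) : |f i| ≤ ⨆ j, |f j| :=
  le_ciSup (f := fun j => |f j|) (Finite.bddAbove_range _) i

theorem decompCost_nonneg (v : Finset ι → ι → ℝ) : 0 ≤ decompCost k v :=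
  sum_nonneg fun _ _ => Real.iSup_nonneg fun _ => abs_nonneg _

theorem abs_le_decompCost {w : ι → ℝ} {v : Finset ι → ι → ℝ} (hv : IsKSupportDecomp k w v)
    (i : ι) : |w i| ≤ decompCost k v := by
  rw [← hv.2, Finset.sum_apply]
  exact (abs_sum_le_sum_abs _ _).trans (sum_le_sum fun g _ => abs_le_iSup_abs _ i)

theorem sum_abs_le_mul_decompCost {w : ι → ℝ} {v : Finset ι → ι → ℝ}
    (hv : IsKSupportDecomp k w v) : ∑ i, |w i| ≤ k * decompCost k v := by
  have hpiece : ∀ g ∈ univ.filter (fun g : Finset ι => g.card ≤ k),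
      ∑ i, |v g i| ≤ k * ⨆ i, |v g i| := by
    intro g hg
    rw [← sum_subset (subset_univ g) fun i _ hi => by rw [hv.1 g i hi, abs_zero]]
    calc ∑ i ∈ g, |v g i| ≤ g.card * ⨆ i, |v g i| := by
          simpa using sum_le_card_nsmul g _ _ fun i _ => abs_le_iSup_abs (v g) i
      _ ≤ k * ⨆ i, |v g i| := by
          gcongr
          · exact Real.iSup_nonneg fun _ => abs_nonneg _
          · exact_mod_cast (mem_filter.1 hg).2
  calc ∑ i, |w i| ≤ ∑ i, ∑ g ∈ univ.filter (fun g : Finset ι => g.card ≤ k), |v g i| := by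
        refine sum_le_sum fun i _ => ?_
        rw [← hv.2, Finset.sum_apply]
        exact abs_sum_le_sum_abs _ _
    _ = ∑ g ∈ univ.filter (fun g : Finset ι => g.card ≤ k), ∑ i, |v g i| := sum_comm
    _ ≤ k * decompCost k v := by
        rw [decompCost, mul_sum]
        exact sum_le_sum hpiece

theorem max_le_decompCost {w : ι → ℝ} {v : Finset ι → ι → ℝ} (hv : IsKSupportDecomp k w v) :
    max (⨆ i, |w i|) ((∑ i, |w i|) / k) ≤ decompCost k v :=
  max_le (Real.iSup_le (abs_le_decompCost hv) (decompCost_nonneg v))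
    (div_le_of_le_mul₀ k.cast_nonneg (decompCost_nonneg v) (by
      rw [mul_comm]; exact sum_abs_le_mul_decompCost hv))

theorem convex_kSupportBall (t : ℝ) : Convex ℝ (kSupportBall (ι := ι) k t) := by
  rintro w₁ ⟨v₁, ⟨hs₁, hsum₁⟩, hc₁⟩ w₂ ⟨v₂, ⟨hs₂, hsum₂⟩, hc₂⟩ a b ha hb hab
  refine ⟨a • v₁ + b • v₂, ⟨fun g i hi => by simp [hs₁ g i hi, hs₂ g i hi], ?_⟩, ?_⟩
  · simp only [Pi.add_apply, Pi.smul_apply, sum_add_distrib, ← smul_sum, hsum₁, hsum₂]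
  · have hsup : ∀ (f : Finset ι → ι → ℝ) g, 0 ≤ ⨆ i, |f g i| :=
      fun f g => Real.iSup_nonneg fun _ => abs_nonneg _
    have hpiece : ∀ g,
        ⨆ i, |(a • v₁ + b • v₂) g i| ≤ a * (⨆ i, |v₁ g i|) + b * ⨆ i, |v₂ g i| := by
      refine fun g => Real.iSup_le (fun i => ?_)
        (add_nonneg (mul_nonneg ha (hsup v₁ g)) (mul_nonneg hb (hsup v₂ g)))
      calc |(a • v₁ + b • v₂) g i| ≤ a * |v₁ g i| + b * |v₂ g i| := by
            simpa [abs_mul, abs_of_nonneg ha, abs_of_nonneg hb] using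
              abs_add_le (a * v₁ g i) (b * v₂ g i)
        _ ≤ _ := by gcongr <;> exact abs_le_iSup_abs _ i
    calc decompCost k (a • v₁ + b • v₂) ≤ a * decompCost k v₁ + b * decompCost k v₂ := by
          simp only [decompCost, mul_sum, ← sum_add_distrib]
          exact sum_le_sum fun g _ => hpiece g
      _ ≤ a * t + b * t := by gcongr
      _ = t := by rw [← add_mul, hab, one_mul]

variable [DecidableEq ι]

theorem exists_card_eq_forall_notMem_le {α : Type*} [LinearOrder α] (f : ι → α) {m : ℕ}
    (hm : m ≤ Fintype.card ι) : ∃ S : Finset ι, S.card = m ∧ ∀ i ∈ S, ∀ j ∉ S, f j ≤ f i := by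
  induction m with
  | zero => exact ⟨∅, rfl, by simp⟩
  | succ m ih =>
    obtain ⟨S, hS, hSf⟩ := ih (by omega)
    have hSc : Sᶜ.Nonempty := by
      rw [← card_pos, card_compl]
      omega
    obtain ⟨j₀, hj₀, hj₀max⟩ := Sᶜ.exists_max_image f hSc
    rw [mem_compl] at hj₀
    refine ⟨insert j₀ S, by rw [card_insert_of_notMem hj₀, hS], fun i hi j hj => ?_⟩
    rw [mem_insert, not_or] at hj
    rcases mem_insert.1 hi with rfl | hi
    · exact hj₀max j (mem_compl.2 hj.2)
    · exact hSf i hi j hj.2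

/-- With `θ` between `|u|` off `S` and `|u|` on `S`:
`∑ |u| |w| ≤ ∑_S |u| |w| + θ (t |S| - ∑_S |w|) ≤ t ∑_S |u|`. -/
theorem sum_mul_le_mul_sum_abs {u w : ι → ℝ} {S : Finset ι} {t : ℝ}
    (hS : ∀ i ∈ S, ∀ j ∉ S, |u j| ≤ |u i|) (hw : ∀ i, |w i| ≤ t)
    (hw₁ : ∑ i, |w i| ≤ S.card * t) : ∑ i, u i * w i ≤ t * ∑ i ∈ S, |u i| := by
  obtain ⟨θ, hθ₀, hθS, hθSc⟩ :
      ∃ θ, 0 ≤ θ ∧ (∀ i ∈ S, θ ≤ |u i|) ∧ ∀ j ∉ S, |u j| ≤ θ := by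
    rcases Sᶜ.eq_empty_or_nonempty with h | h
    · exact ⟨0, le_rfl, fun i _ => abs_nonneg _, fun j hj => absurd (mem_compl.2 hj) (by simp [h])⟩
    · obtain ⟨j₀, hj₀, hmax⟩ := Sᶜ.exists_max_image (fun j => |u j|) h
      exact ⟨_, abs_nonneg _, fun i hi => hS i hi j₀ (mem_compl.1 hj₀),
        fun j hj => hmax j (mem_compl.2 hj)⟩
  have hout : ∑ j ∈ Sᶜ, |u j| * |w j| ≤ θ * (S.card * t - ∑ i ∈ S, |w i|) :=
    calc ∑ j ∈ Sᶜ, |u j| * |w j| ≤ ∑ j ∈ Sᶜ, θ * |w j| :=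
          sum_le_sum fun j hj =>
            mul_le_mul_of_nonneg_right (hθSc j (mem_compl.1 hj)) (abs_nonneg _)
      _ ≤ θ * (S.card * t - ∑ i ∈ S, |w i|) := by
          rw [← mul_sum]
          exact mul_le_mul_of_nonneg_left (by linarith [sum_add_sum_compl S fun i => |w i|]) hθ₀
  have hin : ∑ i ∈ S, |u i| * |w i| + θ * (S.card * t - ∑ i ∈ S, |w i|) ≤
      t * ∑ i ∈ S, |u i| := by
    rw [← nsmul_eq_mul, ← sum_const, ← sum_sub_distrib, mul_sum, mul_sum, ← sum_add_distrib]
    exact sum_le_sum fun i hi => by nlinarith [hθS i hi, hw i]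
  calc ∑ i, u i * w i ≤ ∑ i, |u i| * |w i| :=
        sum_le_sum fun i _ => (le_abs_self _).trans (abs_mul _ _).le
    _ = ∑ i ∈ S, |u i| * |w i| + ∑ j ∈ Sᶜ, |u j| * |w j| := (sum_add_sum_compl S _).symm
    _ ≤ t * ∑ i ∈ S, |u i| := by linarith

theorem sum_mul_ite_sign (u : ι → ℝ) (S : Finset ι) (t : ℝ) :
    ∑ i, u i * (if i ∈ S then t * SignType.sign (u i) else 0) = t * ∑ i ∈ S, |u i| := by
  simp_rw [mul_ite, mul_zero, sum_ite_mem, univ_inter, mul_sum]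
  exact sum_congr rfl fun i _ => by rw [mul_left_comm, self_mul_sign]

theorem isGreatest_sum_mul {u : ι → ℝ} {S : Finset ι} (hS : ∀ i ∈ S, ∀ j ∉ S, |u j| ≤ |u i|) :
    IsGreatest {x | ∃ w : ι → ℝ, ((∀ i, |w i| ≤ 1) ∧ ∑ i, |w i| ≤ S.card) ∧ x = ∑ i, u i * w i}
      (∑ i ∈ S, |u i|) := by
  refine ⟨⟨fun i => if i ∈ S then 1 * SignType.sign (u i) else 0, ⟨fun i => ?_, ?_⟩, ?_⟩, ?_⟩
  · dsimp only
    split_ifs <;> simp [abs_coe_signType_le_one]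
  · calc ∑ i, |if i ∈ S then 1 * (SignType.sign (u i) : ℝ) else 0|
        ≤ ∑ i, if i ∈ S then (1 : ℝ) else 0 :=
          sum_le_sum fun i _ => by split_ifs <;> simp [abs_coe_signType_le_one]
      _ = S.card := by simp
  · rw [sum_mul_ite_sign, one_mul]
  · rintro _ ⟨w, ⟨hw, hw₁⟩, rfl⟩
    simpa using sum_mul_le_mul_sum_abs hS hw (by simpa using hw₁)

variable (k) in
def kSparseSignVectors (t : ℝ) : Set (ι → ℝ) :=
  {e | ∃ (S : Finset ι) (s : ι → SignType), S.card ≤ k ∧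
    e = fun i => if i ∈ S then t * s i else 0}

theorem kSparseSignVectors_subset_kSupportBall {t : ℝ} (ht : 0 ≤ t) :
    kSparseSignVectors (ι := ι) k t ⊆ kSupportBall k t := by
  rintro _ ⟨S, s, hS, rfl⟩
  have hSk : S ∈ univ.filter (fun g : Finset ι => g.card ≤ k) := by simpa using hS
  refine ⟨fun g => if g = S then fun i => if i ∈ S then t * s i else 0 else 0,
    ⟨fun g i hi => ?_, ?_⟩, ?_⟩
  · by_cases hg : g = S <;> simp_all
  · rw [sum_ite_eq' _ S, if_pos hSk]
  · simp only [decompCost, apply_ite (fun f : ι → ℝ => ⨆ i, |f i|), Pi.zero_apply, abs_zero,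
      Real.iSup_const_zero]
    rw [sum_ite_eq' _ S, if_pos hSk]
    refine Real.iSup_le (fun i => ?_) ht
    split_ifs
    · rw [abs_mul, abs_of_nonneg ht]
      exact mul_le_of_le_one_right ht (abs_coe_signType_le_one _)
    · simpa using ht

theorem finite_kSparseSignVectors (t : ℝ) : (kSparseSignVectors (ι := ι) k t).Finite :=
  (Set.finite_range fun p : Finset ι × (ι → SignType) =>
    fun i => if i ∈ p.1 then t * p.2 i else 0).subset
    fun _ ⟨S, s, _, he⟩ => ⟨(S, s), he.symm⟩

theorem mem_convexHull_kSparseSignVectors (hk : k ≤ Fintype.card ι) {t : ℝ} {w : ι → ℝ}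
    (hw : ∀ i, |w i| ≤ t) (hw₁ : ∑ i, |w i| ≤ k * t) :
    w ∈ convexHull ℝ (kSparseSignVectors k t) := by
  by_contra hw_notMem
  obtain ⟨f, r, hf, hfw⟩ := geometric_hahn_banach_closed_point (convex_convexHull ℝ _)
    ((finite_kSparseSignVectors t).isCompact_convexHull ℝ).isClosed hw_notMem
  set u : ι → ℝ := fun i => f fun j => if i = j then 1 else 0
  have hf_apply : ∀ x, f x = ∑ i, u i * x i := fun x => by
    simpa [mul_comm] using LinearMap.pi_apply_eq_sum_univ (f : (ι → ℝ) →ₗ[ℝ] ℝ) x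
  obtain ⟨S, hS, hStop⟩ := exists_card_eq_forall_notMem_le (fun i => |u i|) hk
  have hvertex : (fun i => if i ∈ S then t * SignType.sign (u i) else 0) ∈
      convexHull ℝ (kSparseSignVectors k t) :=
    subset_convexHull ℝ _ ⟨S, fun i => SignType.sign (u i), hS.le, rfl⟩
  have hf_vertex := hf _ hvertex
  rw [hf_apply, sum_mul_ite_sign] at hf_vertex
  rw [hf_apply] at hfw
  linarith [sum_mul_le_mul_sum_abs hStop hw (by rwa [hS])]

theorem mem_kSupportBall (hk : k ≤ Fintype.card ι) {t : ℝ} (ht : 0 ≤ t) {w : ι → ℝ}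
    (hw : ∀ i, |w i| ≤ t) (hw₁ : ∑ i, |w i| ≤ k * t) : w ∈ kSupportBall k t :=
  convexHull_min (kSparseSignVectors_subset_kSupportBall ht) (convex_kSupportBall t)
    (mem_convexHull_kSparseSignVectors hk hw hw₁)

end

theorem ksupInftyNorm_eq_max {d k : ℕ} (hk1 : 1 ≤ k) (hkd : k ≤ d) (w : Fin d → ℝ) :
    ksupInftyNorm d k w = max (⨆ i, |w i|) ((∑ i, |w i|) / k) := by
  set t := max (⨆ i, |w i|) ((∑ i, |w i|) / k)
  have hk : (0 : ℝ) < k := by exact_mod_cast hk1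
  have ht : 0 ≤ t := le_max_of_le_left (Real.iSup_nonneg fun _ => abs_nonneg _)
  have hw : ∀ i, |w i| ≤ t := fun i => (abs_le_iSup_abs w i).trans (le_max_left _ _)
  have hw₁ : ∑ i, |w i| ≤ k * t := by
    rw [mul_comm, ← div_le_iff₀ hk]
    exact le_max_right _ _
  obtain ⟨v, ⟨hsupp, hsum⟩, hcost⟩ := mem_kSupportBall (by simpa using hkd) ht hw hw₁
  unfold ksupInftyNorm
  refine le_antisymm (le_trans (csInf_le ?_ ⟨v, hsupp, hsum, rfl⟩) hcost)
    (le_csInf ⟨_, v, hsupp, hsum, rfl⟩ ?_)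
  · exact ⟨0, by rintro _ ⟨v, -, -, rfl⟩; exact decompCost_nonneg v⟩
  · rintro _ ⟨v, hsupp, hsum, rfl⟩
    exact max_le_decompCost ⟨hsupp, hsum⟩

theorem ksupInftyNorm_le_one_iff {d k : ℕ} (hk1 : 1 ≤ k) (hkd : k ≤ d) (w : Fin d → ℝ) :
    ksupInftyNorm d k w ≤ 1 ↔ (∀ i, |w i| ≤ 1) ∧ ∑ i, |w i| ≤ k := by
  rw [ksupInftyNorm_eq_max hk1 hkd, max_le_iff, div_le_one (by exact_mod_cast hk1)]
  exact and_congr_left' ⟨fun h i => (abs_le_iSup_abs w i).trans h,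
    fun h => Real.iSup_le h zero_le_one⟩

theorem exists_top_finset_of_antitone {d k : ℕ} (hkd : k ≤ d) {u : Fin d → ℝ}
    {σ : Equiv.Perm (Fin d)} (hσ : Antitone fun i => |u (σ i)|) :
    ∃ S : Finset (Fin d), S.card = k ∧ (∀ i ∈ S, ∀ j ∉ S, |u j| ≤ |u i|) ∧
      ∑ i ∈ range k, (if h : i < d then |u (σ ⟨i, h⟩)| else 0) = ∑ i ∈ S, |u i| := by
  refine ⟨univ.map ((Fin.castLEEmb hkd).trans σ.toEmbedding), by simp, ?_, ?_⟩
  · simp only [mem_map, mem_univ, true_and, forall_exists_index, forall_apply_eq_imp_iff]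
    intro a j hj
    have hk : k ≤ σ.symm j := by
      by_contra! h
      exact hj ⟨⟨_, h⟩, by simp⟩
    simpa using hσ (show Fin.castLE hkd a ≤ σ.symm j from Fin.le_def.2 (by simp; omega))
  · rw [sum_map, ← Fin.sum_univ_eq_sum_range]
    exact sum_congr rfl fun a _ => by rw [dif_pos (a.2.trans_le hkd)]; rfl

theorem ksup_infty_dual_and_value {d k : ℕ} (hk1 : 1 ≤ k) (hkd : k ≤ d) :
    (∀ (u : Fin d → ℝ) (σ : Equiv.Perm (Fin d)),
      (Antitone fun i => |u (σ i)|) →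
      sSup {x : ℝ | ∃ w : Fin d → ℝ, ksupInftyNorm d k w ≤ 1 ∧ x = ∑ i, u i * w i} =
        ∑ i ∈ Finset.range k, (if h : i < d then |u (σ ⟨i, h⟩)| else 0)) ∧
    (∀ w : Fin d → ℝ,
      ksupInftyNorm d k w = max (⨆ i, |w i|) ((∑ i, |w i|) / k)) := by
  refine ⟨fun u σ hσ => ?_, ksupInftyNorm_eq_max hk1 hkd⟩
  obtain ⟨S, hS, hStop, hsum⟩ := exists_top_finset_of_antitone hkd hσ
  simp_rw [hsum, ksupInftyNorm_le_one_iff hk1 hkd, ← hS]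
  exact (isGreatest_sum_mul hStop).csSup_eq
end

section
/- Fix w ∈ R^d with components positive and ordered nonincreasingly, and let 0 < a ≤ b, ad ≤ c ≤ bd. Then any minimizer θ* of Σ_i w_i²/θ_i over Θ = {θ : a ≤ θ_i ≤ b, Σ_i θ_i ≤ c} has nonincreasing components: θ*_i ≥ θ*_j whenever i ≤ j. -/
set_option maxHeartbeats 1000000


theorem box_minimizer_antitone {d : ℕ} (w : Fin d → ℝ) (hw : ∀ i, 0 < w i)
    (hmono : ∀ i j : Fin d, i ≤ j → w j ≤ w i)
    (a b c : ℝ) (ha : 0 < a) (hab : a ≤ b) (hc1 : a * d ≤ c) (hc2 : c ≤ b * d)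
    (θ : Fin d → ℝ) (hθbox : ∀ i, a ≤ θ i ∧ θ i ≤ b) (hθsum : ∑ i, θ i ≤ c)
    (hmin : ∀ θ' : Fin d → ℝ, (∀ i, a ≤ θ' i ∧ θ' i ≤ b) → ∑ i, θ' i ≤ c →
      ∑ i, w i ^ 2 / θ i ≤ ∑ i, w i ^ 2 / θ' i) :
    ∀ i j : Fin d, i ≤ j → θ j ≤ θ i := by
  intro i j hij
  by_contra hcon
  push_neg at hcon
  have hne : i ≠ j := by
    rintro rfl; exact lt_irrefl _ hcon
  set t : ℝ := (θ i + θ j) / 2 with ht_def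
  set θ' : Fin d → ℝ := Function.update (Function.update θ i t) j t with hθ'
  have hθ'i : θ' i = t := by
    simp [hθ', Function.update_of_ne hne]
  have hθ'j : θ' j = t := by simp [hθ']
  have hθ'k : ∀ k, k ≠ i → k ≠ j → θ' k = θ k := by
    intro k hki hkj
    simp [hθ', Function.update_of_ne hkj, Function.update_of_ne hki]
  have hbi := hθbox i
  have hbj := hθbox j
  have htbox : a ≤ t ∧ t ≤ b := by
    constructor <;> [skip; skip] <;> rw [ht_def] <;> linarith [hbi.1, hbi.2, hbj.1, hbj.2]
  set S : Finset (Fin d) := Finset.univ \ {i, j} with hS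
  have hsplit : ∀ f : Fin d → ℝ, ∑ k, f k = f i + f j + ∑ k ∈ S, f k := by
    intro f
    rw [hS, Finset.sum_sdiff_eq_sub (Finset.subset_univ _), Finset.sum_pair hne]
    ring
  have hSsame : ∀ f g : Fin d → ℝ, (∀ k, k ≠ i → k ≠ j → f k = g k) →
      ∑ k ∈ S, f k = ∑ k ∈ S, g k := by
    intro f g h
    refine Finset.sum_congr rfl fun k hk => ?_
    simp only [hS, Finset.mem_sdiff, Finset.mem_insert, Finset.mem_singleton] at hk
    exact h k (fun e => hk.2 (Or.inl e)) (fun e => hk.2 (Or.inr e))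
  have hsum' : ∑ k, θ' k = ∑ k, θ k := by
    rw [hsplit θ', hsplit θ, hθ'i, hθ'j, hSsame θ' θ hθ'k, ht_def]
    ring_nf
  have hbox' : ∀ k, a ≤ θ' k ∧ θ' k ≤ b := by
    intro k
    by_cases hki : k = i
    · subst hki; rw [hθ'i]; exact htbox
    by_cases hkj : k = j
    · subst hkj; rw [hθ'j]; exact htbox
    · rw [hθ'k k hki hkj]; exact hθbox k
  have key := hmin θ' hbox' (by rw [hsum']; exact hθsum)
  rw [hsplit (fun k => w k ^ 2 / θ k), hsplit (fun k => w k ^ 2 / θ' k)] at key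
  have hSeq : ∑ k ∈ S, w k ^ 2 / θ' k = ∑ k ∈ S, w k ^ 2 / θ k :=
    hSsame _ _ (fun k h1 h2 => by rw [hθ'k k h1 h2])
  rw [hSeq, hθ'i, hθ'j] at key
  have key2 : w i ^ 2 / θ i + w j ^ 2 / θ j ≤ w i ^ 2 / t + w j ^ 2 / t := by linarith
  have hx : 0 < θ i := lt_of_lt_of_le ha hbi.1
  have hy : 0 < θ j := lt_of_lt_of_le ha hbj.1
  have ht : 0 < t := by rw [ht_def]; linarith
  have hwij := hmono i j hij
  have hwj := hw j
  have hwi := hw i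
  have ht' : t ≠ 0 := ne_of_gt ht
  rw [div_add_div _ _ (ne_of_gt hx) (ne_of_gt hy), div_add_div _ _ ht' ht',
    div_le_div_iff₀ (by positivity) (by positivity)] at key2
  rw [ht_def] at key2
  have h2 : w j ^ 2 ≤ w i ^ 2 := by nlinarith
  have h1 : w j ^ 2 * θ i < w i ^ 2 * θ j :=
    calc w j ^ 2 * θ i < w j ^ 2 * θ j := by nlinarith [pow_pos hwj 2]
      _ ≤ w i ^ 2 * θ j := by nlinarith
  have hs : (0:ℝ) < θ i + θ j := by linarith
  have h5 : (w i ^ 2 * θ j - w j ^ 2 * θ i) * (θ j - θ i) * (θ i + θ j) ≤ 0 := by nlinarith [key2]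
  have h6 : 0 < (w i ^ 2 * θ j - w j ^ 2 * θ i) * (θ j - θ i) * (θ i + θ j) :=
    mul_pos (mul_pos (sub_pos.2 h1) (sub_pos.2 hcon)) hs
  linarith
end
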